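/- Fix ε ≥ 0. Under Assumption 1, the function f* minimizes the risk R̄ among all feasible discriminant functions: for every measurable feasible f : 𝒳 → ℝ, one has R̄(f*, ε) ≤ R̄(f, ε), where R̄(f, ε) = P(Y f(X) < −ε) + (1/2)·P(|f(X)| ≤ ε). -/

import Mathlib

/-
Write `C = {f < -ε}` and `A = {ε < f}`. Since `P(X ∈ S, Y = 1) = ∫_S η` and
`P(X ∈ S, Y = -1) = ∫_S (1 - η)`, the risk splits into two decoupled pieces,
`R̄(f, ε) = 1/2 + 1/2 (∫_C (2η - 1) + ∫_A (1 - 2η))`, and feasibility constrains `C` and `A`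
separately: `∫_C η ≤ ∫_{η < t₁} η` and `∫_A (1 - η) ≤ ∫_{η > t₋₁} (1 - η)`. Each piece is then a
Neyman–Pearson problem solved by the sublevel set of the thresholds: with the Lagrange
multiplier `2 - 1/t₁`, which is `≤ 0` exactly because `t₁ ≤ 1/2`, the integrand
`2η - 1 - (2 - 1/t₁) η` changes sign at `η = t₁`. The rule `f*` rejects precisely on
`{t₁ ≤ η ≤ t₋₁}`, so its sets `C`, `A` are these optimal sublevel sets.
-/

open MeasureTheory ProbabilityTheory

section NeymanPearson

variable {α : Type*} [MeasurableSpace α] {μ : Measure α}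

theorem setIntegral_le_setIntegral_of_lagrange {φ w : α → ℝ} (hφ : Integrable φ μ)
    (hw : Integrable w μ) {S T : Set α} (hS : MeasurableSet S) (hT : MeasurableSet T)
    {c : ℝ} (hc : c ≤ 0) (hφT : ∀ x ∈ T, φ x ≤ c * w x) (hφTc : ∀ x ∉ T, c * w x ≤ φ x)
    (hSw : ∫ x in S, w x ∂μ ≤ ∫ x in T, w x ∂μ) :
    ∫ x in T, φ x ∂μ ≤ ∫ x in S, φ x ∂μ := by
  have hφT' : ∫ x in T \ S, φ x ∂μ ≤ c * ∫ x in T \ S, w x ∂μ := by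
    rw [← integral_const_mul]
    exact setIntegral_mono_on hφ.integrableOn (hw.const_mul c).integrableOn (hT.diff hS)
      fun x hx => hφT x hx.1
  have hφS' : c * ∫ x in S \ T, w x ∂μ ≤ ∫ x in S \ T, φ x ∂μ := by
    rw [← integral_const_mul]
    exact setIntegral_mono_on (hw.const_mul c).integrableOn hφ.integrableOn (hS.diff hT)
      fun x hx => hφTc x hx.2
  have hw_diff : c * ∫ x in T \ S, w x ∂μ ≤ c * ∫ x in S \ T, w x ∂μ := by
    have hwS := integral_inter_add_sdiff hT hw.integrableOn (s := S)
    have hwT := integral_inter_add_sdiff hS hw.integrableOn (s := T)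
    rw [Set.inter_comm] at hwT
    exact mul_le_mul_of_nonpos_left (by linarith) hc
  have hφS := integral_inter_add_sdiff hT hφ.integrableOn (s := S)
  have hφT := integral_inter_add_sdiff hS hφ.integrableOn (s := T)
  rw [Set.inter_comm] at hφT
  linarith

theorem setIntegral_sublevel_le_of_setIntegral_le [IsFiniteMeasure μ] {g : α → ℝ}
    (hg : Measurable g) (hgi : Integrable g μ) {t : ℝ} (ht : 0 < t) (ht_half : t ≤ 1 / 2)
    {S : Set α} (hS : MeasurableSet S)
    (hSg : ∫ x in S, g x ∂μ ≤ ∫ x in {x | g x < t}, g x ∂μ) :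
    ∫ x in {x | g x < t}, g x ∂μ - ∫ x in {x | g x < t}, (1 - g x) ∂μ
      ≤ ∫ x in S, g x ∂μ - ∫ x in S, (1 - g x) ∂μ := by
  have hgi' : Integrable (fun x => 1 - g x) μ := (integrable_const 1).sub hgi
  have hmargin : ∀ x, g x - (1 - g x) - (2 - 1 / t) * g x = (g x - t) / t := by
    intro x; field_simp; ring
  rw [← integral_sub hgi.integrableOn hgi'.integrableOn,
    ← integral_sub hgi.integrableOn hgi'.integrableOn]
  refine setIntegral_le_setIntegral_of_lagrange (φ := fun x => g x - (1 - g x)) (c := 2 - 1 / t)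
    (hgi.sub hgi') hgi hS (measurableSet_lt hg measurable_const) ?_ (fun x hx => ?_)
    (fun x hx => ?_) hSg
  · linarith [(le_div_iff₀ ht).2 (by linarith : 2 * t ≤ 1)]
  · have := hmargin x
    have : (g x - t) / t ≤ 0 := div_nonpos_of_nonpos_of_nonneg (by linarith [hx.out]) ht.le
    linarith
  · have := hmargin x
    have : 0 ≤ (g x - t) / t := div_nonneg (sub_nonneg.2 (by simpa using hx)) ht.le
    linarith

end NeymanPearson

theorem cond_setOf_mul_lt_neg {Ω : Type*} [MeasurableSpace Ω] {P : Measure Ω} {Y : Ω → ℝ}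
    (hY : Measurable Y) (c ε : ℝ) (Z : Ω → ℝ) :
    P[|{ω | Y ω = c}] {ω | Y ω * Z ω < -ε} = P[|{ω | Y ω = c}] {ω | c * Z ω < -ε} := by
  have hc : MeasurableSet {ω | Y ω = c} := hY (measurableSet_singleton c)
  rw [← cond_inter_self hc, ← cond_inter_self hc {ω | c * Z ω < -ε}]
  congr 1
  ext ω
  simp only [Set.mem_inter_iff, Set.mem_ofPred_eq, and_congr_right_iff]
  rintro rfl
  rfl

section BinaryLabels

variable {𝒳 Ω : Type*} [MeasurableSpace 𝒳] [MeasurableSpace Ω] {P : Measure Ω}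
  {X : Ω → 𝒳} {Y : Ω → ℝ}

theorem measureReal_inter_eq_one_add_inter_eq_neg_one [IsFiniteMeasure P] (hY : Measurable Y)
    (hYval : ∀ ω, Y ω = 1 ∨ Y ω = -1) (s : Set Ω) :
    P.real (s ∩ {ω | Y ω = 1}) + P.real (s ∩ {ω | Y ω = -1}) = P.real s := by
  have hcompl : s \ {ω | Y ω = 1} = s ∩ {ω | Y ω = -1} := by
    ext ω
    rcases hYval ω with h | h <;> norm_num [h]
  rw [← hcompl]
  exact measureReal_inter_add_sdiff (hY (measurableSet_singleton 1))

theorem measureReal_preimage_inter_eq_one {η : 𝒳 → ℝ} (hη : Measurable η) (hη0 : ∀ x, 0 ≤ η x)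
    (hreg : ∀ A : Set 𝒳, MeasurableSet A →
      P {ω | X ω ∈ A ∧ Y ω = 1} = ∫⁻ x in A, ENNReal.ofReal (η x) ∂(P.map X))
    {A : Set 𝒳} (hA : MeasurableSet A) :
    P.real (X ⁻¹' A ∩ {ω | Y ω = 1}) = ∫ x in A, η x ∂(P.map X) := by
  rw [measureReal_def, integral_eq_lintegral_of_nonneg_ae (ae_of_all _ hη0)
    hη.aestronglyMeasurable.restrict, ← hreg A hA]
  rfl

theorem measureReal_preimage_inter_eq_neg_one [IsFiniteMeasure P] (hX : Measurable X)
    (hY : Measurable Y) (hYval : ∀ ω, Y ω = 1 ∨ Y ω = -1) {η : 𝒳 → ℝ}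
    (hηi : Integrable η (P.map X))
    (h1 : ∀ A, MeasurableSet A → P.real (X ⁻¹' A ∩ {ω | Y ω = 1}) = ∫ x in A, η x ∂(P.map X))
    {A : Set 𝒳} (hA : MeasurableSet A) :
    P.real (X ⁻¹' A ∩ {ω | Y ω = -1}) = ∫ x in A, (1 - η x) ∂(P.map X) := by
  rw [integral_sub (integrable_const 1).integrableOn hηi.integrableOn, setIntegral_const,
    smul_eq_mul, mul_one, map_measureReal_apply hX hA, ← h1 A hA,
    ← measureReal_inter_eq_one_add_inter_eq_neg_one hY hYval (X ⁻¹' A)]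
  ring

theorem setIntegral_le_of_cond_le [IsFiniteMeasure P] {B : Set Ω} (hB : MeasurableSet B)
    (hPB : P B ≠ 0) {ρ : 𝒳 → ℝ}
    (hρ : ∀ A, MeasurableSet A → P.real (X ⁻¹' A ∩ B) = ∫ x in A, ρ x ∂(P.map X))
    {S T : Set 𝒳} (hS : MeasurableSet S) (hT : MeasurableSet T)
    (h : P[|B] (X ⁻¹' S) ≤ P[|B] (X ⁻¹' T)) :
    ∫ x in S, ρ x ∂(P.map X) ≤ ∫ x in T, ρ x ∂(P.map X) := by
  rw [cond_apply hB, cond_apply hB, ENNReal.mul_le_mul_iff_right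
    (ENNReal.inv_ne_zero.2 (measure_ne_top _ _)) (ENNReal.inv_ne_top.2 hPB)] at h
  rw [← hρ S hS, ← hρ T hT, Set.inter_comm, Set.inter_comm _ B]
  exact ENNReal.toReal_mono (measure_ne_top _ _) h

theorem measureReal_misclassified_add_half_measureReal_rejected [IsProbabilityMeasure P]
    (hX : Measurable X) (hY : Measurable Y) (hYval : ∀ ω, Y ω = 1 ∨ Y ω = -1) {η : 𝒳 → ℝ}
    (h1 : ∀ A, MeasurableSet A → P.real (X ⁻¹' A ∩ {ω | Y ω = 1}) = ∫ x in A, η x ∂(P.map X))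
    (hm : ∀ A, MeasurableSet A →
      P.real (X ⁻¹' A ∩ {ω | Y ω = -1}) = ∫ x in A, (1 - η x) ∂(P.map X))
    {ε : ℝ} (hε : 0 ≤ ε) {g : 𝒳 → ℝ} (hC : MeasurableSet {x | g x < -ε})
    (hA : MeasurableSet {x | ε < g x}) :
    P.real {ω | Y ω * g (X ω) < -ε} + 1 / 2 * P.real {ω | |g (X ω)| ≤ ε}
      = 1 / 2 + 1 / 2 * ((∫ x in {x | g x < -ε}, η x ∂(P.map X)
          - ∫ x in {x | g x < -ε}, (1 - η x) ∂(P.map X))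
        + (∫ x in {x | ε < g x}, (1 - η x) ∂(P.map X)
          - ∫ x in {x | ε < g x}, η x ∂(P.map X))) := by
  set C := {x | g x < -ε}
  set A := {x | ε < g x}
  have hmisclassified : {ω | Y ω * g (X ω) < -ε}
      = (X ⁻¹' C ∩ {ω | Y ω = 1}) ∪ (X ⁻¹' A ∩ {ω | Y ω = -1}) := by
    ext ω
    rcases hYval ω with h | h <;> norm_num [h, C, A]
  have hrejected : {ω | |g (X ω)| ≤ ε} = (X ⁻¹' A ∪ X ⁻¹' C)ᶜ := by
    ext ω
    simp [abs_le, C, A, and_comm]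
  have hdisj_label : Disjoint (X ⁻¹' C ∩ {ω | Y ω = 1}) (X ⁻¹' A ∩ {ω | Y ω = -1}) :=
    Set.disjoint_left.2 fun ω hω₁ hω₂ => by norm_num [hω₁.2.out] at hω₂
  have hdisj_sign : Disjoint (X ⁻¹' A) (X ⁻¹' C) :=
    Set.disjoint_left.2 fun ω (hA : ε < g (X ω)) (hC : g (X ω) < -ε) => by linarith
  rw [hmisclassified, hrejected,
    measureReal_union hdisj_label ((hX hA).inter (hY (measurableSet_singleton _))),
    probReal_compl_eq_one_sub ((hX hA).union (hX hC)), measureReal_union hdisj_sign (hX hC),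
    ← measureReal_inter_eq_one_add_inter_eq_neg_one hY hYval (X ⁻¹' A),
    ← measureReal_inter_eq_one_add_inter_eq_neg_one hY hYval (X ⁻¹' C),
    h1 C hC, h1 A hA, hm C hC, hm A hA]
  ring

theorem setIntegral_sublevel_sub_le_of_cond_le [IsFiniteMeasure P] (hY : Measurable Y) {c : ℝ}
    (hPc : P {ω | Y ω = c} ≠ 0) {ρ : 𝒳 → ℝ} (hρ : Measurable ρ)
    (hρ0 : ∀ x, 0 ≤ ρ x) (hρi : Integrable ρ (P.map X))
    (hρc : ∀ A, MeasurableSet A → P.real (X ⁻¹' A ∩ {ω | Y ω = c}) = ∫ x in A, ρ x ∂(P.map X))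
    {s α : ℝ} (hα : 0 < α) (hs : P[|{ω | Y ω = c}] {ω | ρ (X ω) < s} = ENNReal.ofReal α)
    (hs_half : s ≤ 1 / 2) {ε : ℝ} {g : 𝒳 → ℝ} (hg : Measurable g)
    (hfeas : P[|{ω | Y ω = c}] {ω | Y ω * g (X ω) < -ε} ≤ ENNReal.ofReal α) :
    ∫ x in {x | ρ x < s}, ρ x ∂(P.map X) - ∫ x in {x | ρ x < s}, (1 - ρ x) ∂(P.map X)
      ≤ ∫ x in {x | c * g x < -ε}, ρ x ∂(P.map X)
        - ∫ x in {x | c * g x < -ε}, (1 - ρ x) ∂(P.map X) := by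
  have hs_pos : 0 < s := by
    obtain ⟨ω, hω⟩ := nonempty_of_measure_ne_zero (hs ▸ (ENNReal.ofReal_pos.2 hα).ne')
    linarith [hρ0 (X ω), hω.out]
  have hS : MeasurableSet {x | c * g x < -ε} := measurableSet_lt (hg.const_mul c) measurable_const
  refine setIntegral_sublevel_le_of_setIntegral_le hρ hρi hs_pos hs_half hS ?_
  refine setIntegral_le_of_cond_le (hY (measurableSet_singleton c)) hPc hρc hS
    (measurableSet_lt hρ measurable_const) ?_
  exact (cond_setOf_mul_lt_neg hY c ε (g ∘ X) ▸ hfeas).trans_eq hs.symm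

end BinaryLabels

noncomputable def thresholdRule (tm t1 ε r : ℝ) : ℝ :=
  if tm < r then 1 + ε else if t1 ≤ r then ε * Real.sign (r - 1 / 2) else -(1 + ε)

theorem abs_mul_sign_le {ε : ℝ} (hε : 0 ≤ ε) (r : ℝ) : |ε * Real.sign r| ≤ ε := by
  rcases Real.sign_apply_eq r with h | h | h <;> simp [h, abs_of_nonneg hε, hε]

theorem thresholdRule_lt_neg_iff {tm t1 ε : ℝ} (ht : t1 ≤ tm) (hε : 0 ≤ ε) (r : ℝ) :
    thresholdRule tm t1 ε r < -ε ↔ r < t1 := by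
  have := abs_le.1 (abs_mul_sign_le hε (r - 1 / 2))
  unfold thresholdRule
  split_ifs with h₁ h₂ <;> constructor <;> intro h <;> linarith

theorem lt_thresholdRule_iff {tm t1 ε : ℝ} (hε : 0 ≤ ε) (r : ℝ) :
    ε < thresholdRule tm t1 ε r ↔ tm < r := by
  have := abs_le.1 (abs_mul_sign_le hε (r - 1 / 2))
  unfold thresholdRule
  split_ifs with h₁ h₂ <;> constructor <;> intro h <;> linarith

theorem fstar_minimizes_Rbar_general
    {𝒳 : Type*} [MeasurableSpace 𝒳]
    {Ω : Type*} [MeasurableSpace Ω] (P : Measure Ω) [IsProbabilityMeasure P]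
    (X : Ω → 𝒳) (Y : Ω → ℝ) (hX : Measurable X) (hY : Measurable Y)
    (hYval : ∀ ω, Y ω = 1 ∨ Y ω = -1)
    (hpos1 : 0 < P {ω | Y ω = 1}) (hposm : 0 < P {ω | Y ω = -1})
    -- η is a measurable version of the regression function x ↦ P(Y = 1 ∣ X = x)
    (η : 𝒳 → ℝ) (hη : Measurable η) (hη01 : ∀ x, η x ∈ Set.Icc (0 : ℝ) 1)
    (hreg : ∀ A : Set 𝒳, MeasurableSet A →
      P {ω | X ω ∈ A ∧ Y ω = 1} = ∫⁻ x in A, ENNReal.ofReal (η x) ∂(P.map X))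
    -- noncoverage levels and thresholds
    (αm α1 : ℝ) (hαm : αm ∈ Set.Ioo (0 : ℝ) 1) (hα1 : α1 ∈ Set.Ioo (0 : ℝ) 1)
    (tm t1 : ℝ)
    (htm : P[|{ω | Y ω = -1}] {ω | tm < η (X ω)} = ENNReal.ofReal αm)
    (ht1 : P[|{ω | Y ω = 1}] {ω | η (X ω) < t1} = ENNReal.ofReal α1)
    -- Assumption 1: the distribution of η(X) is atomless under both class-conditional
    -- distributions, and t1 ≤ 1/2 ≤ tm
    (ht1half : t1 ≤ 1 / 2) (hhalftm : 1 / 2 ≤ tm)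
    (ε : ℝ) (hε : 0 ≤ ε)
    -- the Bayes-type rule f*
    (fstar : 𝒳 → ℝ)
    (hfstar : ∀ x, fstar x =
      if tm < η x then 1 + ε
      else if t1 ≤ η x then ε * Real.sign (η x - 1 / 2)
      else -(1 + ε))
    -- an arbitrary measurable feasible competitor f
    (f : 𝒳 → ℝ) (hf : Measurable f)
    (hfeasm : P[|{ω | Y ω = -1}] {ω | Y ω * f (X ω) < -ε} ≤ ENNReal.ofReal αm)
    (hfeas1 : P[|{ω | Y ω = 1}] {ω | Y ω * f (X ω) < -ε} ≤ ENNReal.ofReal α1) :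
    (P {ω | Y ω * fstar (X ω) < -ε}).toReal
      + (1 / 2) * (P {ω | |fstar (X ω)| ≤ ε}).toReal
    ≤ (P {ω | Y ω * f (X ω) < -ε}).toReal
      + (1 / 2) * (P {ω | |f (X ω)| ≤ ε}).toReal := by
  have hηi : Integrable η (P.map X) :=
    .of_bound hη.aestronglyMeasurable 1 (ae_of_all _ fun x => by
      rw [Real.norm_eq_abs, abs_of_nonneg (hη01 x).1]; exact (hη01 x).2)
  have h1 := fun A (hA : MeasurableSet A) ↦
    measureReal_preimage_inter_eq_one hη (fun x ↦ (hη01 x).1) hreg hA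
  have hm := fun A (hA : MeasurableSet A) ↦
    measureReal_preimage_inter_eq_neg_one hX hY hYval hηi h1 hA
  have key_one := setIntegral_sublevel_sub_le_of_cond_le hY hpos1.ne' hη (fun x ↦ (hη01 x).1)
    hηi h1 hα1.1 ht1 ht1half hf hfeas1
  -- class `-1` is class `1` for the posterior `1 - η`, and `{1 - η < 1 - tm} = {tm < η}`
  have key_neg := setIntegral_sublevel_sub_le_of_cond_le (ρ := fun x ↦ 1 - η x) (s := 1 - tm)
    hY hposm.ne' (measurable_const.sub hη) (fun x ↦ sub_nonneg.2 (hη01 x).2)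
    ((integrable_const 1).sub hηi) hm hαm.1 (by simpa only [sub_lt_sub_iff_left] using htm)
    (by linarith) hf hfeasm
  simp only [one_mul, neg_one_mul, neg_lt_neg_iff, sub_lt_sub_iff_left, sub_sub_cancel]
    at key_one key_neg
  have hC_star : {x | fstar x < -ε} = {x | η x < t1} := Set.ext fun x ↦ by
    rw [Set.mem_ofPred_eq, hfstar x]; exact thresholdRule_lt_neg_iff (ht1half.trans hhalftm) hε _
  have hA_star : {x | ε < fstar x} = {x | tm < η x} := Set.ext fun x ↦ by
    rw [Set.mem_ofPred_eq, hfstar x]; exact lt_thresholdRule_iff hε _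
  simp only [← measureReal_def]
  rw [measureReal_misclassified_add_half_measureReal_rejected hX hY hYval h1 hm hε
      (measurableSet_lt hf measurable_const) (measurableSet_lt measurable_const hf),
    measureReal_misclassified_add_half_measureReal_rejected hX hY hYval h1 hm hε
      (hC_star ▸ measurableSet_lt hη measurable_const)
      (hA_star ▸ measurableSet_lt measurable_const hη), hC_star, hA_star]
  linarith

/-- Under Assumption 1, `f*` minimizes the risk `R̄(f, ε) = P(Y f(X) < −ε) + (1/2)·P(|f(X)| ≤ ε)` among all measurable feasible discriminant functions. -/
theorem fstar_minimizes_Rbar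
    {𝒳 : Type*} [MeasurableSpace 𝒳]
    {Ω : Type*} [MeasurableSpace Ω] (P : Measure Ω) [IsProbabilityMeasure P]
    (X : Ω → 𝒳) (Y : Ω → ℝ) (hX : Measurable X) (hY : Measurable Y)
    (hYval : ∀ ω, Y ω = 1 ∨ Y ω = -1)
    (hpos1 : 0 < P {ω | Y ω = 1}) (hposm : 0 < P {ω | Y ω = -1})
    -- η is a measurable version of the regression function x ↦ P(Y = 1 ∣ X = x)
    (η : 𝒳 → ℝ) (hη : Measurable η) (hη01 : ∀ x, η x ∈ Set.Icc (0 : ℝ) 1)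
    (hreg : ∀ A : Set 𝒳, MeasurableSet A →
      P {ω | X ω ∈ A ∧ Y ω = 1} = ∫⁻ x in A, ENNReal.ofReal (η x) ∂(P.map X))
    -- noncoverage levels and thresholds
    (αm α1 : ℝ) (hαm : αm ∈ Set.Ioo (0 : ℝ) 1) (hα1 : α1 ∈ Set.Ioo (0 : ℝ) 1)
    (tm t1 : ℝ)
    (htm : P[|{ω | Y ω = -1}] {ω | tm < η (X ω)} = ENNReal.ofReal αm)
    (ht1 : P[|{ω | Y ω = 1}] {ω | η (X ω) < t1} = ENNReal.ofReal α1)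
    -- Assumption 1: the distribution of η(X) is atomless under both class-conditional
    -- distributions, and t1 ≤ 1/2 ≤ tm
    (hatomlessm : ∀ t : ℝ, P[|{ω | Y ω = -1}] {ω | η (X ω) = t} = 0)
    (hatomless1 : ∀ t : ℝ, P[|{ω | Y ω = 1}] {ω | η (X ω) = t} = 0)
    (ht1half : t1 ≤ 1 / 2) (hhalftm : 1 / 2 ≤ tm)
    (ε : ℝ) (hε : 0 ≤ ε)
    -- the Bayes-type rule f*
    (fstar : 𝒳 → ℝ)
    (hfstar : ∀ x, fstar x =
      if tm < η x then 1 + ε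
      else if t1 ≤ η x then ε * Real.sign (η x - 1 / 2)
      else -(1 + ε))
    -- an arbitrary measurable feasible competitor f
    (f : 𝒳 → ℝ) (hf : Measurable f)
    (hfeasm : P[|{ω | Y ω = -1}] {ω | Y ω * f (X ω) < -ε} ≤ ENNReal.ofReal αm)
    (hfeas1 : P[|{ω | Y ω = 1}] {ω | Y ω * f (X ω) < -ε} ≤ ENNReal.ofReal α1) :
    (P {ω | Y ω * fstar (X ω) < -ε}).toReal
      + (1 / 2) * (P {ω | |fstar (X ω)| ≤ ε}).toReal
    ≤ (P {ω | Y ω * f (X ω) < -ε}).toReal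
      + (1 / 2) * (P {ω | |f (X ω)| ≤ ε}).toReal :=
  fstar_minimizes_Rbar_general P X Y hX hY hYval hpos1 hposm η hη hη01 hreg αm α1 hαm hα1 tm t1 htm
    ht1 ht1half hhalftm ε hε fstar hfstar f hf hfeasm hfeas1
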